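/- Let X, Y be metric spaces, D ⊆ X open with compact closure, and f : D → D_* ⊆ Y continuous such that f maps sequences converging to ∂D to sequences whose limit points lie in ∂D_* (f is boundary-preserving/closed). If {d_k} is a decreasing sequence of subsets of D with ∩ cl(d_k) ⊆ ∂D and cl(D_*) compact, then the cluster set C(f,P) = ∩ cl(f(d_k)) is a nonempty subset of ∂D_*. -/
import Mathlib


open Filter Topology

/-- If the body of the chain lies on `∂D` and `f` is boundary preserving, then the
cluster set along the chain is a nonempty subset of `∂D_*`. -/
theorem cluster_set_subset_boundary
    {X Y : Type*} [MetricSpace X] [MetricSpace Y]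
    (D : Set X) (Dstar : Set Y) (f : X → Y)
    (hD : IsOpen D) (hDc : IsCompact (closure D))
    (hf : ContinuousOn f D) (hmaps : Set.MapsTo f D Dstar)
    (hDstarC : IsCompact (closure Dstar))
    (hbp : ∀ (x : ℕ → X) (x₀ : X) (y : Y), (∀ k, x k ∈ D) → x₀ ∈ frontier D →
      Tendsto x atTop (𝓝 x₀) → MapClusterPt y atTop (fun k => f (x k)) → y ∈ frontier Dstar)
    (d : ℕ → Set X) (hanti : Antitone d) (hsub : ∀ k, d k ⊆ D) (hne : ∀ k, (d k).Nonempty)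
    (hbody : (⋂ k, closure (d k)) ⊆ frontier D) :
    (⋂ k, closure (f '' d k)).Nonempty ∧ (⋂ k, closure (f '' d k)) ⊆ frontier Dstar := by
  have hsubDstar : ∀ k, closure (f '' d k) ⊆ closure Dstar := fun k =>
    closure_mono (fun y ⟨x, hx, hxy⟩ => hxy ▸ hmaps (hsub k hx))
  constructor
  · refine IsCompact.nonempty_iInter_of_sequence_nonempty_isCompact_isClosed
      (fun k => closure (f '' d k))
      (fun n => closure_mono (Set.image_mono (hanti (Nat.le_succ n))))
      (fun n => ((hne n).image f).closure) ?_ (fun n => isClosed_closure)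
    exact IsCompact.of_isClosed_subset hDstarC isClosed_closure (hsubDstar 0)
  · intro y hy
    have hy' : ∀ k, y ∈ closure (f '' d k) := fun k => Set.mem_iInter.mp hy k
    have hchoice : ∀ k : ℕ, ∃ x ∈ d k, dist (f x) y < 1 / (k + 1) := by
      intro k
      have hpos : (0 : ℝ) < 1 / (k + 1) := by positivity
      obtain ⟨z, hz, hdz⟩ := Metric.mem_closure_iff.mp (hy' k) _ hpos
      obtain ⟨x, hx, rfl⟩ := hz
      exact ⟨x, hx, by rwa [dist_comm] at hdz⟩
    choose x hx hdx using hchoice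
    obtain ⟨x₀, hx₀, φ, hφ, hlim⟩ := hDc.tendsto_subseq
      (fun k => subset_closure (hsub k (hx k)))
    have hx₀body : x₀ ∈ ⋂ k, closure (d k) := by
      refine Set.mem_iInter.mpr fun k => ?_
      refine mem_closure_of_tendsto hlim ?_
      filter_upwards [eventually_ge_atTop k] with j hj
      exact hanti (le_trans hj (hφ.le_apply)) (hx (φ j))
    have hfront : x₀ ∈ frontier D := hbody hx₀body
    have htend : Tendsto (fun j => f (x (φ j))) atTop (𝓝 y) := by
      rw [tendsto_iff_dist_tendsto_zero]
      refine squeeze_zero (fun j => dist_nonneg) (fun j => (hdx (φ j)).le) ?_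
      have h1 : Tendsto (fun j : ℕ => 1 / ((j : ℝ) + 1)) atTop (𝓝 0) :=
        tendsto_one_div_add_atTop_nhds_zero_nat
      exact h1.comp hφ.tendsto_atTop
    refine hbp (fun j => x (φ j)) x₀ y (fun j => hsub _ (hx (φ j))) hfront hlim ?_
    exact htend.mapClusterPt
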